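/- Let A, B ∈ D[X] have the same degree d and valuation 0, fix ℓ ∈ {1, …, ⌊d/2⌋}, let (S_i)_{−1 ≤ i ≤ d} be the sequence of symmetric subresultants of A and B, and let (Ŝ_j)_{−1 ≤ j ≤ 2ℓ−1} be the sequence of symmetric subresultants of the truncations A_{|ℓ} and B_{|ℓ}. Then for 1 ≤ j < ℓ one has S_{j|(ℓ−j)} = Ŝ_{j|(ℓ−j)}; consequently S_{j|k} = Ŝ_{j|k} for every 0 ≤ k ≤ ℓ−j, and in particular S_j(0) = Ŝ_j(0) and lc(S_j) = lc(Ŝ_j) for every j < ℓ. -/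

import Mathlib

/-!
`P_{|ℓ}` keeps the `ℓ` lowest coefficients of `P` and moves the `ℓ` highest ones down by
`d + 1 - 2ℓ`. For `j < ℓ`, every column of `Sylv_{j,m}(A, B)` reads, in every row `X^r A` or
`X^r B` (`r < j`), either only coefficients of degree `< ℓ` or only coefficients of degree
`> d - ℓ`. Hence `Sylv_{j,m}(A, B) = Sylv_{j,m'}(A_{|ℓ}, B_{|ℓ})`, with `m' = m` for the `ℓ - j`
lowest and `m' = m - (d + 1 - 2ℓ)` for the `ℓ - j` highest coefficients of `S_j`, so these
coefficients of `S_j` and `Ŝ_j` coincide.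
-/

open Polynomial

/-- The `2j × 2j` square submatrix `Sylv_{j,ℓ}(A,B)` of the Sylvester-type matrix of `A` and `B`
(of formal degree `d`): rows are the coefficient vectors of `A, XA, …, X^{j-1}A, B, …, X^{j-1}B`,
keeping the columns of degrees `0, …, j-2`, the column of degree `j-1+ℓ`, and the columns of
degrees `d, …, d+j-1`. -/
noncomputable def sylvMat {R : Type*} [CommRing R] (A B : R[X]) (d j ℓ : ℕ) :
    Matrix (Fin (2 * j)) (Fin (2 * j)) R := fun r c =>
  (if (r : ℕ) < j then X ^ (r : ℕ) * A else X ^ ((r : ℕ) - j) * B).coeff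
    (if (c : ℕ) < j - 1 then (c : ℕ)
     else if (c : ℕ) = j - 1 then j - 1 + ℓ
     else d + ((c : ℕ) - j))

/-- The sequence of symmetric subresultants of `A` and `B` (of formal degree `d`):
`S_0 = B` and `S_j = ∑_{ℓ=0}^{d-j} det (Sylv_{j,ℓ}(A,B)) · X^ℓ` for `1 ≤ j`. -/
noncomputable def symSubres {R : Type*} [CommRing R] (A B : R[X]) (d j : ℕ) : R[X] :=
  if j = 0 then B
  else ∑ ℓ ∈ Finset.range (d - j + 1), C (sylvMat A B d j ℓ).det * X ^ ℓ

/-- Symmetric truncation `P_{|ℓ}` of a polynomial `P` of formal degree `d`: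
`P_{|ℓ} = p_0 + ⋯ + p_{ℓ-1}X^{ℓ-1} + p_{d-ℓ+1}X^ℓ + ⋯ + p_d X^{2ℓ-1}` for `1 ≤ ℓ ≤ ⌊d/2⌋`,
with `P_{|0} = 0` and `P_{|ℓ} = P` for `ℓ > ⌊d/2⌋`. -/
noncomputable def strunc {R : Type*} [CommRing R] (P : R[X]) (d ℓ : ℕ) : R[X] :=
  if ℓ = 0 then 0
  else if 2 * ℓ ≤ d then
    (∑ i ∈ Finset.range ℓ, C (P.coeff i) * X ^ i) +
      ∑ i ∈ Finset.range ℓ, C (P.coeff (d - ℓ + 1 + i)) * X ^ (ℓ + i)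
  else P

section
variable {R : Type*} [CommRing R] {d ℓ : ℕ}

lemma coeff_strunc (P : R[X]) (hℓ : ℓ ≠ 0) (hd : 2 * ℓ ≤ d) (i : ℕ) :
    (strunc P d ℓ).coeff i =
      if i < ℓ then P.coeff i else if i < 2 * ℓ then P.coeff (i + (d + 1 - 2 * ℓ)) else 0 := by
  simp only [strunc, if_neg hℓ, if_pos hd, coeff_add, finsetSum_coeff, coeff_C_mul, coeff_X_pow,
    mul_ite, mul_one, mul_zero, Finset.sum_ite_eq, Finset.mem_range]
  rcases lt_or_ge i ℓ with hi | hi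
  · rw [if_pos hi, if_pos hi, Finset.sum_eq_zero fun x _ => if_neg (by omega), add_zero]
  · obtain ⟨k, rfl⟩ := Nat.exists_eq_add_of_le hi
    simp only [add_lt_iff_neg_left, not_lt_zero, if_false, zero_add,
      add_right_inj, Finset.sum_ite_eq, Finset.mem_range]
    split_ifs <;> first | rfl | (congr 1; omega)

lemma coeff_X_pow_mul_strunc {P : R[X]} (hP : P.natDegree ≤ d) (hℓ : ℓ ≠ 0) (hd : 2 * ℓ ≤ d)
    {r e e' : ℕ} (h : (e < ℓ ∧ e' = e) ∨ (ℓ + r ≤ e' ∧ e = e' + (d + 1 - 2 * ℓ))) :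
    (X ^ r * P).coeff e = (X ^ r * strunc P d ℓ).coeff e' := by
  simp only [coeff_X_pow_mul', coeff_strunc P hℓ hd]
  rcases h with ⟨he, rfl⟩ | ⟨he', rfl⟩
  · split_ifs <;> first | rfl | omega
  · split_ifs <;> first | omega | (congr 1; omega) |
      exact coeff_eq_zero_of_natDegree_lt (by omega)

lemma coeff_X_pow_mul_sylvCol_strunc {P : R[X]} (hP : P.natDegree ≤ d) {j m m' r : ℕ}
    (hj : j < ℓ) (hd : 2 * ℓ ≤ d)
    (hm : (j - 1 + m < ℓ ∧ m' = m) ∨ (ℓ ≤ m' ∧ m = m' + (d + 1 - 2 * ℓ))) (hr : r ≤ j - 1)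
    (c : ℕ) :
    (X ^ r * P).coeff (if c < j - 1 then c else if c = j - 1 then j - 1 + m else d + (c - j)) =
      (X ^ r * strunc P d ℓ).coeff
        (if c < j - 1 then c else if c = j - 1 then j - 1 + m' else 2 * ℓ - 1 + (c - j)) := by
  apply coeff_X_pow_mul_strunc hP (by omega) hd
  split_ifs <;> omega

lemma sylvMat_strunc {A B : R[X]} (hA : A.natDegree ≤ d) (hB : B.natDegree ≤ d) {j m m' : ℕ}
    (hj : j < ℓ) (hd : 2 * ℓ ≤ d)
    (hm : (j - 1 + m < ℓ ∧ m' = m) ∨ (ℓ ≤ m' ∧ m = m' + (d + 1 - 2 * ℓ))) :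
    sylvMat A B d j m = sylvMat (strunc A d ℓ) (strunc B d ℓ) (2 * ℓ - 1) j m' := by
  ext r c
  have hr := r.isLt
  simp only [sylvMat]
  by_cases hrj : (r : ℕ) < j
  · rw [if_pos hrj, if_pos hrj]
    exact coeff_X_pow_mul_sylvCol_strunc hA hj hd hm (by omega) c
  · rw [if_neg hrj, if_neg hrj]
    exact coeff_X_pow_mul_sylvCol_strunc hB hj hd hm (by omega) c

lemma coeff_symSubres {A B : R[X]} {j n : ℕ} (hj : j ≠ 0) (hn : n ≤ d - j) :
    (symSubres A B d j).coeff n = (sylvMat A B d j n).det := by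
  simp only [symSubres, if_neg hj, finsetSum_coeff, coeff_C_mul, coeff_X_pow, mul_ite, mul_one,
    mul_zero, Finset.sum_ite_eq, Finset.mem_range, if_pos (Nat.lt_succ_of_le hn)]

lemma coeff_symSubres_strunc {A B : R[X]} (hA : A.natDegree ≤ d) (hB : B.natDegree ≤ d)
    {j n n' : ℕ} (hj : j < ℓ) (hd : 2 * ℓ ≤ d)
    (hn : (n < ℓ - j ∧ n' = n) ∨ (ℓ ≤ n' ∧ n' ≤ 2 * ℓ - 1 - j ∧ n = n' + (d + 1 - 2 * ℓ))) :
    (symSubres A B d j).coeff n =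
      (symSubres (strunc A d ℓ) (strunc B d ℓ) (2 * ℓ - 1) j).coeff n' := by
  rcases eq_or_ne j 0 with rfl | hj0
  · simpa only [symSubres, if_true, pow_zero, one_mul] using
      coeff_X_pow_mul_strunc (r := 0) hB (by omega) hd (by omega)
  · rw [coeff_symSubres hj0 (by omega), coeff_symSubres hj0 (by omega),
      sylvMat_strunc (m' := n') hA hB hj hd (by omega)]

lemma strunc_congr {P Q : R[X]} {d' k : ℕ} (hd : 2 * k ≤ d) (hd' : 2 * k ≤ d')
    (hlow : ∀ i < k, P.coeff i = Q.coeff i)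
    (hhigh : ∀ i < k, P.coeff (d - k + 1 + i) = Q.coeff (d' - k + 1 + i)) :
    strunc P d k = strunc Q d' k := by
  rcases eq_or_ne k 0 with rfl | hk
  · simp only [strunc, if_true]
  · simp only [strunc, if_neg hk, if_pos hd, if_pos hd']
    congr 1 <;> refine Finset.sum_congr rfl fun i hi => ?_
    · rw [hlow i (Finset.mem_range.mp hi)]
    · rw [hhigh i (Finset.mem_range.mp hi)]

lemma strunc_symSubres_strunc {A B : R[X]} (hA : A.natDegree ≤ d) (hB : B.natDegree ≤ d)
    {j k : ℕ} (hj1 : 1 ≤ j) (hj : j < ℓ) (hd : 2 * ℓ ≤ d) (hk : k ≤ ℓ - j) :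
    strunc (symSubres A B d j) (d - j) k =
      strunc (symSubres (strunc A d ℓ) (strunc B d ℓ) (2 * ℓ - 1) j) (2 * ℓ - 1 - j) k :=
  strunc_congr (by omega) (by omega)
    (fun _ _ => coeff_symSubres_strunc hA hB hj hd (.inl ⟨by omega, rfl⟩))
    (fun _ _ => coeff_symSubres_strunc hA hB hj hd (.inr ⟨by omega, by omega, by omega⟩))

end

theorem trunc_of_symSubres_general (D : Subring ℂ) (A B : Polynomial D) (d ℓ : ℕ)
    (hAdeg : A.degree = (d : ℕ)) (hBdeg : B.degree = (d : ℕ))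
    (hℓ2 : 2 * ℓ ≤ d) :
    (∀ j, 1 ≤ j → j < ℓ →
      strunc (symSubres A B d j) (d - j) (ℓ - j) =
        strunc (symSubres (strunc A d ℓ) (strunc B d ℓ) (2 * ℓ - 1) j) (2 * ℓ - 1 - j)
          (ℓ - j)) ∧
    (∀ j, 1 ≤ j → j < ℓ → ∀ k, k ≤ ℓ - j →
      strunc (symSubres A B d j) (d - j) k =
        strunc (symSubres (strunc A d ℓ) (strunc B d ℓ) (2 * ℓ - 1) j) (2 * ℓ - 1 - j) k) ∧
    (∀ j, j < ℓ →
      (symSubres A B d j).coeff 0 =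
        (symSubres (strunc A d ℓ) (strunc B d ℓ) (2 * ℓ - 1) j).coeff 0 ∧
      (symSubres A B d j).coeff (d - j) =
        (symSubres (strunc A d ℓ) (strunc B d ℓ) (2 * ℓ - 1) j).coeff (2 * ℓ - 1 - j)) := by
  have hA : A.natDegree ≤ d := (natDegree_eq_of_degree_eq_some hAdeg).le
  have hB : B.natDegree ≤ d := (natDegree_eq_of_degree_eq_some hBdeg).le
  refine ⟨fun j hj1 hj => strunc_symSubres_strunc hA hB hj1 hj hℓ2 le_rfl,
    fun j hj1 hj k hk => strunc_symSubres_strunc hA hB hj1 hj hℓ2 hk,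
    fun j hj => ⟨?_, ?_⟩⟩
  · exact coeff_symSubres_strunc hA hB hj hℓ2 (.inl ⟨by omega, rfl⟩)
  · exact coeff_symSubres_strunc hA hB hj hℓ2 (.inr ⟨by omega, le_rfl, by omega⟩)

/-- Truncations of the symmetric subresultants agree with the symmetric subresultants of the
truncations: `S_{j|(ℓ-j)} = Ŝ_{j|(ℓ-j)}` for `1 ≤ j < ℓ`; consequently `S_{j|k} = Ŝ_{j|k}`
for `0 ≤ k ≤ ℓ-j`, and `S_j(0) = Ŝ_j(0)` and `lc(S_j) = lc(Ŝ_j)` for every `j < ℓ`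
(leading coefficients taken at the formal degrees `d-j` and `2ℓ-1-j`). -/
theorem trunc_of_symSubres (D : Subring ℂ) (A B : Polynomial D) (d ℓ : ℕ)
    (hAdeg : A.degree = (d : ℕ)) (hBdeg : B.degree = (d : ℕ))
    (hAval : A.coeff 0 ≠ 0) (hBval : B.coeff 0 ≠ 0)
    (hℓ1 : 1 ≤ ℓ) (hℓ2 : 2 * ℓ ≤ d) :
    (∀ j, 1 ≤ j → j < ℓ →
      strunc (symSubres A B d j) (d - j) (ℓ - j) =
        strunc (symSubres (strunc A d ℓ) (strunc B d ℓ) (2 * ℓ - 1) j) (2 * ℓ - 1 - j)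
          (ℓ - j)) ∧
    (∀ j, 1 ≤ j → j < ℓ → ∀ k, k ≤ ℓ - j →
      strunc (symSubres A B d j) (d - j) k =
        strunc (symSubres (strunc A d ℓ) (strunc B d ℓ) (2 * ℓ - 1) j) (2 * ℓ - 1 - j) k) ∧
    (∀ j, j < ℓ →
      (symSubres A B d j).coeff 0 =
        (symSubres (strunc A d ℓ) (strunc B d ℓ) (2 * ℓ - 1) j).coeff 0 ∧
      (symSubres A B d j).coeff (d - j) =
        (symSubres (strunc A d ℓ) (strunc B d ℓ) (2 * ℓ - 1) j).coeff (2 * ℓ - 1 - j)) :=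
  trunc_of_symSubres_general D A B d ℓ hAdeg hBdeg hℓ2
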